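/- For v ∈ R^3 with 0 < |v| < 1 and W₁, W₂: R^3 → R with |W_i(x)| ≤ C⟨x⟩^{−1}, the interaction term a(x,t) = 20W₁³(x)W₂(x−vt) + 30W₁²(x)W₂²(x−vt) + 20W₁(x)W₂³(x−vt) satisfies ‖a‖_{L^{5/4}_t([t₀,∞); L^{5/2}_x(R^3))} → 0 as t₀ → ∞; in particular a ∈ L^{5/4}_t L^{5/2}_x on [T,∞) for every sufficiently large T. -/

import Mathlib

open MeasureTheory

noncomputable section

abbrev E3 := EuclideanSpace ℝ (Fin 3)

def jb (y : E3) : ℝ := Real.sqrt (1 + ‖y‖ ^ 2)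

/-- The interaction coefficient
`a(x,t) = 20W₁³(x)W₂(x−vt) + 30W₁²(x)W₂²(x−vt) + 20W₁(x)W₂³(x−vt)`. -/
def acoef (v : E3) (W₁ W₂ : E3 → ℝ) (x : E3) (t : ℝ) : ℝ :=
  20 * W₁ x ^ 3 * W₂ (x - t • v) + 30 * W₁ x ^ 2 * W₂ (x - t • v) ^ 2
    + 20 * W₁ x * W₂ (x - t • v) ^ 3

/-- The mixed norm `‖a‖_{L^{5/4}_t([t₀,∞);L^{5/2}_x)}`, in `ℝ≥0∞`. -/
def mixedNorm (v : E3) (W₁ W₂ : E3 → ℝ) (t₀ : ℝ) : ENNReal :=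
  (∫⁻ t in Set.Ici t₀,
      ((∫⁻ x : E3, (‖acoef v W₁ W₂ x t‖₊ : ENNReal) ^ ((5 : ℝ) / 2)) ^ ((2 : ℝ) / 5))
        ^ ((5 : ℝ) / 4)) ^ ((4 : ℝ) / 5)

/-!
Write `⟨x⟩ = jb x`. The bound on `W₁, W₂` and the algebra of the interaction polynomial give
`|a(x,t)| ≲ C⁴ ⟨x⟩⁻¹⟨x - tv⟩⁻¹ (⟨x⟩⁻² + ⟨x - tv⟩⁻²)`, and Peetre's inequality turns the product
of the two brackets into `√2 ⟨tv⟩⁻¹`. Since `⟨·⟩⁻²` lies in `L^{5/2}(ℝ³)` (`5 > 3`) and `L^{5/2}`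
norms are translation invariant, `‖a(t)‖_{L^{5/2}} ≲ ⟨tv⟩⁻¹`. For `v ≠ 0` the function
`⟨tv⟩^{-5/4}` is integrable in `t`, so the `L^{5/4}_t` norm over `[t₀, ∞)` is a tail of a
convergent integral and tends to zero.
-/

open Filter Topology ENNReal

lemma jb_pos (y : E3) : 0 < jb y := Real.sqrt_pos.2 (by positivity)

lemma continuous_inv_jb_pow (k : ℕ) : Continuous fun x : E3 => (jb x)⁻¹ ^ k :=
  ((by unfold jb; fun_prop : Continuous jb).inv₀ fun y => (jb_pos y).ne').pow k

lemma inv_jb_rpow (y : E3) (p : ℝ) : (jb y)⁻¹ ^ p = (1 + ‖y‖ ^ 2) ^ (-p / 2) := by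
  have h : 0 ≤ 1 + ‖y‖ ^ 2 := by positivity
  rw [jb, Real.sqrt_eq_rpow, ← Real.rpow_neg_one, ← Real.rpow_mul h, ← Real.rpow_mul h]
  ring_nf

/-- Peetre's inequality `⟨y⟩ ≤ √2 ⟨x⟩⟨x - y⟩`, inverted. -/
lemma inv_jb_mul_inv_jb_sub_le (x y : E3) :
    (jb x)⁻¹ * (jb (x - y))⁻¹ ≤ √2 * (jb y)⁻¹ := by
  have hpeetre : jb y ≤ √2 * (jb x * jb (x - y)) := by
    have hy : ‖y‖ ≤ ‖x‖ + ‖x - y‖ := by simpa using norm_sub_le x (x - y)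
    rw [jb, jb, jb, ← Real.sqrt_mul (by positivity), ← Real.sqrt_mul (by positivity)]
    refine Real.sqrt_le_sqrt ?_
    nlinarith [sq_nonneg (‖x‖ - ‖x - y‖), sq_nonneg (‖x‖ * ‖x - y‖), norm_nonneg y,
      mul_self_le_mul_self (norm_nonneg y) hy]
  have hx := jb_pos x
  have hxy := jb_pos (x - y)
  have hy := jb_pos y
  rw [← mul_inv, ← one_div, ← div_eq_mul_inv, div_le_div_iff₀ (by positivity) hy]
  linarith

lemma abs_interaction_le {a b α β : ℝ} (ha : |a| ≤ α) (hb : |b| ≤ β) :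
    |20 * a ^ 3 * b + 30 * a ^ 2 * b ^ 2 + 20 * a * b ^ 3| ≤
      35 * (α * β) * (α ^ 2 + β ^ 2) := by
  have hq : |20 * a ^ 2 + 30 * a * b + 20 * b ^ 2| ≤ 35 * (a ^ 2 + b ^ 2) :=
    abs_le.2 ⟨by nlinarith [sq_nonneg (a + b)], by nlinarith [sq_nonneg (a - b)]⟩
  have hα : 0 ≤ α := (abs_nonneg a).trans ha
  have hβ : 0 ≤ β := (abs_nonneg b).trans hb
  have ha2 : a ^ 2 ≤ α ^ 2 := by simpa using pow_le_pow_left₀ (abs_nonneg a) ha 2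
  have hb2 : b ^ 2 ≤ β ^ 2 := by simpa using pow_le_pow_left₀ (abs_nonneg b) hb 2
  calc |20 * a ^ 3 * b + 30 * a ^ 2 * b ^ 2 + 20 * a * b ^ 3|
      = |a| * |b| * |20 * a ^ 2 + 30 * a * b + 20 * b ^ 2| := by
        rw [← abs_mul, ← abs_mul]; ring_nf
    _ ≤ α * β * (35 * (a ^ 2 + b ^ 2)) := by gcongr
    _ ≤ 35 * (α * β) * (α ^ 2 + β ^ 2) := by
        have : 0 ≤ α * β := mul_nonneg hα hβ
        nlinarith

lemma abs_acoef_le {v : E3} {W₁ W₂ : E3 → ℝ} {C : ℝ}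
    (hW₁ : ∀ x : E3, |W₁ x| ≤ C * (jb x)⁻¹) (hW₂ : ∀ x : E3, |W₂ x| ≤ C * (jb x)⁻¹)
    (x : E3) (t : ℝ) :
    |acoef v W₁ W₂ x t| ≤
      35 * √2 * C ^ 4 * (jb (t • v))⁻¹ * ((jb x)⁻¹ ^ 2 + (jb (x - t • v))⁻¹ ^ 2) := by
  have h := abs_interaction_le (hW₁ x) (hW₂ (x - t • v))
  have hpeetre := inv_jb_mul_inv_jb_sub_le x (t • v)
  calc |acoef v W₁ W₂ x t|
      ≤ 35 * C ^ 4 * ((jb x)⁻¹ * (jb (x - t • v))⁻¹) *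
          ((jb x)⁻¹ ^ 2 + (jb (x - t • v))⁻¹ ^ 2) := by
        rw [acoef]; convert h using 1; ring
    _ ≤ 35 * C ^ 4 * (√2 * (jb (t • v))⁻¹) * ((jb x)⁻¹ ^ 2 + (jb (x - t • v))⁻¹ ^ 2) := by
        gcongr
    _ = _ := by ring

lemma eLpNorm_acoef_le {v : E3} {W₁ W₂ : E3 → ℝ} {C : ℝ}
    (hW₁ : ∀ x : E3, |W₁ x| ≤ C * (jb x)⁻¹) (hW₂ : ∀ x : E3, |W₂ x| ≤ C * (jb x)⁻¹)
    {p : ℝ≥0∞} (hp : 1 ≤ p) (t : ℝ) :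
    eLpNorm (acoef v W₁ W₂ · t) p volume ≤
      ENNReal.ofReal (jb (t • v))⁻¹ *
        (ENNReal.ofReal (70 * √2 * C ^ 4) * eLpNorm (fun x : E3 => (jb x)⁻¹ ^ 2) p volume) := by
  have hc : 0 ≤ 35 * √2 * C ^ 4 * (jb (t • v))⁻¹ := by have := jb_pos (t • v); positivity
  have hf := continuous_inv_jb_pow 2
  have htranslate : eLpNorm (fun x => (jb (x - t • v))⁻¹ ^ 2) p volume =
      eLpNorm (fun x : E3 => (jb x)⁻¹ ^ 2) p volume :=
    eLpNorm_comp_measurePreserving (g := fun x : E3 => (jb x)⁻¹ ^ 2) hf.aestronglyMeasurable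
      (measurePreserving_sub_right _ _)
  calc eLpNorm (acoef v W₁ W₂ · t) p volume
      ≤ eLpNorm ((35 * √2 * C ^ 4 * (jb (t • v))⁻¹) •
          ((fun x : E3 => (jb x)⁻¹ ^ 2) + fun x => (jb (x - t • v))⁻¹ ^ 2)) p volume := by
        refine eLpNorm_mono_real fun x => ?_
        simpa [Real.norm_eq_abs] using abs_acoef_le hW₁ hW₂ x t
    _ ≤ ‖35 * √2 * C ^ 4 * (jb (t • v))⁻¹‖ₑ * (eLpNorm (fun x : E3 => (jb x)⁻¹ ^ 2) p volume
          + eLpNorm (fun x => (jb (x - t • v))⁻¹ ^ 2) p volume) := by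
        rw [eLpNorm_const_smul]
        gcongr
        exact eLpNorm_add_le hf.aestronglyMeasurable
          (hf.comp (continuous_sub_right _)).aestronglyMeasurable hp
    _ = _ := by
        rw [htranslate, Real.enorm_of_nonneg hc, ← two_mul,
          show 70 * √2 * C ^ 4 = 2 * (35 * √2 * C ^ 4) by ring,
          ENNReal.ofReal_mul (show (0 : ℝ) ≤ 2 by norm_num),
          ENNReal.ofReal_mul (show (0 : ℝ) ≤ 35 * √2 * C ^ 4 by positivity),
          ENNReal.ofReal_ofNat]
        ring

lemma memLp_inv_jb_pow {k : ℕ} {p : ℝ≥0∞} (hp0 : p ≠ 0) (hp : p ≠ ∞)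
    (hkp : 3 < k * p.toReal) : MemLp (fun x : E3 => (jb x)⁻¹ ^ k) p volume := by
  refine (integrable_norm_rpow_iff (continuous_inv_jb_pow k).aestronglyMeasurable hp0 hp).1 ?_
  have hint := integrable_rpow_neg_one_add_norm_sq (E := E3) (μ := volume)
    (r := k * p.toReal) (by simpa using hkp)
  refine hint.congr (Eventually.of_forall fun x => ?_)
  have h0 : 0 ≤ (jb x)⁻¹ := (inv_pos.2 (jb_pos x)).le
  simp only [norm_pow, Real.norm_of_nonneg h0]
  rw [← Real.rpow_natCast ((jb x)⁻¹), ← Real.rpow_mul h0, inv_jb_rpow]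

lemma lintegral_inv_jb_smul_rpow_lt_top {v : E3} (hv : v ≠ 0) {p : ℝ} (hp : 1 < p) :
    ∫⁻ t : ℝ, ENNReal.ofReal (jb (t • v))⁻¹ ^ p < ∞ := by
  have hint : Integrable (fun t : ℝ => ((1 : ℝ) + ‖t * ‖v‖‖ ^ 2) ^ (-p / 2)) :=
    (integrable_rpow_neg_one_add_norm_sq (E := ℝ) (μ := volume) (by simpa using hp)).comp_mul_right'
      (norm_ne_zero_iff.2 hv)
  refine lt_of_eq_of_lt (lintegral_congr fun t => ?_) hint.lintegral_lt_top
  rw [ENNReal.ofReal_rpow_of_nonneg (inv_pos.2 (jb_pos _)).le (by linarith), inv_jb_rpow,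
    norm_smul, norm_mul, norm_norm]

lemma tendsto_setLIntegral_Ici_atTop {μ : Measure ℝ} {f : ℝ → ℝ≥0∞} (hf : ∫⁻ t, f t ∂μ ≠ ∞) :
    Tendsto (fun t₀ => ∫⁻ t in Set.Ici t₀, f t ∂μ) atTop (𝓝 0) := by
  have h := tendsto_measure_iInter_atTop (μ := μ.withDensity f)
    (fun t₀ => measurableSet_Ici.nullMeasurableSet) (fun _ _ h => Set.Ici_subset_Ici.2 h)
    ⟨0, by
      rw [withDensity_apply _ measurableSet_Ici]
      exact ne_top_of_le_ne_top hf (setLIntegral_le_lintegral _ _)⟩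
  have hempty : ⋂ t₀ : ℝ, Set.Ici t₀ = ∅ :=
    Set.eq_empty_of_forall_notMem fun t ht => by
      have := Set.mem_iInter.1 ht (t + 1)
      norm_num at this
  rw [hempty, measure_empty] at h
  simpa [Function.comp_def, withDensity_apply _ measurableSet_Ici] using h

lemma mixedNorm_eq (v : E3) (W₁ W₂ : E3 → ℝ) (t₀ : ℝ) :
    mixedNorm v W₁ W₂ t₀ =
      (∫⁻ t in Set.Ici t₀, eLpNorm (acoef v W₁ W₂ · t) (5 / 2) volume ^ (5 / 4 : ℝ))
        ^ (4 / 5 : ℝ) := by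
  rw [mixedNorm]
  congr 1
  refine lintegral_congr fun t => ?_
  rw [eLpNorm_eq_lintegral_rpow_enorm_toReal (by norm_num)
    (ENNReal.div_ne_top (by simp) (by simp))]
  norm_num [enorm_eq_nnnorm]

theorem stmt17_general (v : E3) (hv0 : 0 < ‖v‖)
    (W₁ W₂ : E3 → ℝ) (C : ℝ)
    (hW₁ : ∀ x : E3, |W₁ x| ≤ C * (jb x)⁻¹) (hW₂ : ∀ x : E3, |W₂ x| ≤ C * (jb x)⁻¹) :
    (∃ T : ℝ, ∀ t₀ : ℝ, T ≤ t₀ → mixedNorm v W₁ W₂ t₀ < ⊤) ∧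
    Filter.Tendsto (fun t₀ => mixedNorm v W₁ W₂ t₀) Filter.atTop (nhds 0) := by
  set B : ℝ≥0∞ := ENNReal.ofReal (70 * √2 * C ^ 4) *
    eLpNorm (fun x : E3 => (jb x)⁻¹ ^ 2) (5 / 2) volume
  have hB : B ^ (5 / 4 : ℝ) ≠ ∞ := ENNReal.rpow_ne_top_of_nonneg (by norm_num) <|
    ENNReal.mul_ne_top ENNReal.ofReal_ne_top (memLp_inv_jb_pow (by norm_num)
      (ENNReal.div_ne_top (by simp) (by simp)) (by norm_num)).eLpNorm_ne_top
  have hdecay (t : ℝ) : eLpNorm (acoef v W₁ W₂ · t) (5 / 2) volume ^ (5 / 4 : ℝ) ≤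
      ENNReal.ofReal (jb (t • v))⁻¹ ^ (5 / 4 : ℝ) * B ^ (5 / 4 : ℝ) :=
    (ENNReal.rpow_le_rpow (eLpNorm_acoef_le hW₁ hW₂
      ((ENNReal.le_div_iff_mul_le (by simp) (by simp)).2 (by norm_num)) t) (by norm_num)).trans_eq
      (ENNReal.mul_rpow_of_nonneg _ _ (by norm_num))
  have hfinite : ∫⁻ t, eLpNorm (acoef v W₁ W₂ · t) (5 / 2) volume ^ (5 / 4 : ℝ) ≠ ∞ := by
    refine ne_top_of_le_ne_top ?_ (lintegral_mono hdecay)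
    rw [lintegral_mul_const' _ _ hB]
    exact ENNReal.mul_ne_top
      (lintegral_inv_jb_smul_rpow_lt_top (norm_pos_iff.1 hv0) (by norm_num)).ne hB
  simp_rw [mixedNorm_eq]
  refine ⟨⟨0, fun t₀ _ => ENNReal.rpow_lt_top_of_nonneg (by norm_num)
    (ne_top_of_le_ne_top hfinite (setLIntegral_le_lintegral _ _))⟩, ?_⟩
  simpa [Function.comp_def, ENNReal.zero_rpow_of_pos] using
    ((ENNReal.continuous_rpow_const (y := 4 / 5)).tendsto 0).comp
      (tendsto_setLIntegral_Ici_atTop hfinite)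

/-- The interaction coefficient `a` is perturbative for large times:
`‖a‖_{L^{5/4}_t([t₀,∞);L^{5/2}_x)} → 0` as `t₀ → ∞`; in particular it is finite on
`[T,∞)` for all large `T`. -/
theorem stmt17 (v : E3) (hv0 : 0 < ‖v‖) (hv1 : ‖v‖ < 1)
    (W₁ W₂ : E3 → ℝ) (hW₁m : Measurable W₁) (hW₂m : Measurable W₂) (C : ℝ)
    (hW₁ : ∀ x : E3, |W₁ x| ≤ C * (jb x)⁻¹) (hW₂ : ∀ x : E3, |W₂ x| ≤ C * (jb x)⁻¹) :
    (∃ T : ℝ, ∀ t₀ : ℝ, T ≤ t₀ → mixedNorm v W₁ W₂ t₀ < ⊤) ∧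
    Filter.Tendsto (fun t₀ => mixedNorm v W₁ W₂ t₀) Filter.atTop (nhds 0) :=
  stmt17_general v hv0 W₁ W₂ C hW₁ hW₂

end
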